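/- Let a_n ≥ 0 for 0 ≤ n ≤ N, let A, B, C ≥ 0 be constants and h = T/N. If a_n ≤ A + B(h Σ_{k=0}^{n-1} a_k²)^{1/2} + C h Σ_{k=0}^{n-1} a_k for all n ≤ N, then a_n² ≤ 3A² + (3B² + 3C²T) h Σ_{k=0}^{n-1} a_k², and by the discrete Gronwall inequality, max_{0≤n≤N} a_n ≤ √3 A exp( (3B² + 3C²T) T / 2 ). -/

import Mathlib

/-- discrete Gronwall-type argument for the uniform moment bounds. -/
theorem stmt15 (T : ℝ) (hT : 0 < T) (N : ℕ) (hN : 0 < N) (A B C : ℝ)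
    (hA : 0 ≤ A) (hB : 0 ≤ B) (hC : 0 ≤ C) (a : ℕ → ℝ) (ha : ∀ n, 0 ≤ a n)
    (hrec : ∀ n ≤ N, a n ≤ A + B * Real.sqrt (T / N * ∑ k ∈ Finset.range n, a k ^ 2)
      + C * (T / N) * ∑ k ∈ Finset.range n, a k) :
    (∀ n ≤ N, a n ^ 2 ≤ 3 * A ^ 2
        + (3 * B ^ 2 + 3 * C ^ 2 * T) * (T / N) * ∑ k ∈ Finset.range n, a k ^ 2) ∧
    (∀ n ≤ N, a n ≤ Real.sqrt 3 * A * Real.exp ((3 * B ^ 2 + 3 * C ^ 2 * T) * T / 2)) := by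
  have hNpos : (0:ℝ) < N := by exact_mod_cast hN
  set h : ℝ := T / N with hh
  have hhpos : 0 < h := div_pos hT hNpos
  have hQ : ∀ n, 0 ≤ ∑ k ∈ Finset.range n, a k ^ 2 := fun n =>
    Finset.sum_nonneg fun k _ => sq_nonneg _
  -- Part 1
  have part1 : ∀ n ≤ N, a n ^ 2 ≤ 3 * A ^ 2
      + (3 * B ^ 2 + 3 * C ^ 2 * T) * h * ∑ k ∈ Finset.range n, a k ^ 2 := by
    intro n hn
    set Q : ℝ := ∑ k ∈ Finset.range n, a k ^ 2 with hQdef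
    set S : ℝ := ∑ k ∈ Finset.range n, a k with hSdef
    have hQ0 : 0 ≤ Q := hQ n
    have hS0 : 0 ≤ S := Finset.sum_nonneg fun k _ => ha k
    have h1 : a n ≤ A + B * Real.sqrt (h * Q) + C * h * S := hrec n hn
    have h2 : a n ^ 2 ≤ (A + B * Real.sqrt (h * Q) + C * h * S) ^ 2 := by
      apply pow_le_pow_left₀ (ha n) h1
    have h3 : (A + B * Real.sqrt (h * Q) + C * h * S) ^ 2
        ≤ 3 * A ^ 2 + 3 * (B * Real.sqrt (h * Q)) ^ 2 + 3 * (C * h * S) ^ 2 := by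
      nlinarith [sq_nonneg (A - B * Real.sqrt (h * Q)), sq_nonneg (A - C * h * S),
        sq_nonneg (B * Real.sqrt (h * Q) - C * h * S)]
    have hsq : Real.sqrt (h * Q) ^ 2 = h * Q :=
      Real.sq_sqrt (mul_nonneg hhpos.le hQ0)
    have hCS : S ^ 2 ≤ n * Q := by
      have := sq_sum_le_card_mul_sum_sq (s := Finset.range n) (f := a)
      simpa using this
    have hnh : (n : ℝ) * h ≤ T := by
      have : (n : ℝ) ≤ N := by exact_mod_cast hn
      rw [hh]
      calc (n:ℝ) * (T / N) ≤ (N:ℝ) * (T / N) := by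
            apply mul_le_mul_of_nonneg_right this (by positivity)
        _ = T := by field_simp
    have hterm : 3 * (C * h * S) ^ 2 ≤ 3 * C ^ 2 * T * (h * Q) := by
      have h4 : (C * h * S) ^ 2 = C ^ 2 * h * (h * S ^ 2) := by ring
      have h5 : h * S ^ 2 ≤ h * (n * Q) := by
        apply mul_le_mul_of_nonneg_left hCS hhpos.le
      have h6 : C ^ 2 * h * (h * S ^ 2) ≤ C ^ 2 * h * (h * (n * Q)) := by
        apply mul_le_mul_of_nonneg_left h5 (by positivity)
      have h7 : C ^ 2 * h * (h * (n * Q)) = C ^ 2 * ((n:ℝ) * h) * (h * Q) := by ring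
      have h8 : C ^ 2 * ((n:ℝ) * h) * (h * Q) ≤ C ^ 2 * T * (h * Q) := by
        apply mul_le_mul_of_nonneg_right _ (by positivity)
        apply mul_le_mul_of_nonneg_left hnh (by positivity)
      nlinarith
    calc a n ^ 2 ≤ 3 * A ^ 2 + 3 * (B * Real.sqrt (h * Q)) ^ 2 + 3 * (C * h * S) ^ 2 :=
          h2.trans h3
      _ = 3 * A ^ 2 + 3 * B ^ 2 * (h * Q) + 3 * (C * h * S) ^ 2 := by
          rw [mul_pow]; rw [hsq]; ring
      _ ≤ 3 * A ^ 2 + 3 * B ^ 2 * (h * Q) + 3 * C ^ 2 * T * (h * Q) := by linarith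
      _ = 3 * A ^ 2 + (3 * B ^ 2 + 3 * C ^ 2 * T) * h * Q := by ring
  refine ⟨part1, ?_⟩
  -- Part 2: discrete Gronwall
  set E : ℝ := 3 * B ^ 2 + 3 * C ^ 2 * T with hE
  have hE0 : 0 ≤ E := by positivity
  have gron : ∀ n, n ≤ N → a n ^ 2 ≤ 3 * A ^ 2 * (1 + E * h) ^ n := by
    intro n
    induction n using Nat.strong_induction_on with
    | _ n ih =>
      intro hn
      have key := part1 n hn
      have hsum : ∑ k ∈ Finset.range n, a k ^ 2
          ≤ ∑ k ∈ Finset.range n, 3 * A ^ 2 * (1 + E * h) ^ k := by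
        apply Finset.sum_le_sum
        intro k hk
        exact ih k (Finset.mem_range.mp hk) ((Finset.mem_range.mp hk).le.trans hn)
      have hgeom : E * h * ∑ k ∈ Finset.range n, (1 + E * h) ^ k
          = (1 + E * h) ^ n - 1 := by
        have := geom_sum_mul (1 + E * h) n
        simpa [mul_comm] using this
      calc a n ^ 2 ≤ 3 * A ^ 2 + E * h * ∑ k ∈ Finset.range n, a k ^ 2 := key
        _ ≤ 3 * A ^ 2 + E * h * ∑ k ∈ Finset.range n, 3 * A ^ 2 * (1 + E * h) ^ k := by
            apply add_le_add le_rfl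
            apply mul_le_mul_of_nonneg_left hsum (by positivity)
        _ = 3 * A ^ 2 + 3 * A ^ 2 * (E * h * ∑ k ∈ Finset.range n, (1 + E * h) ^ k) := by
            rw [← Finset.mul_sum]; ring
        _ = 3 * A ^ 2 * (1 + E * h) ^ n := by rw [hgeom]; ring
  intro n hn
  have h1 : (1 + E * h) ^ n ≤ Real.exp (E * T) := by
    have hb : 1 + E * h ≤ Real.exp (E * h) := by
      have := Real.add_one_le_exp (E * h)
      linarith
    calc (1 + E * h) ^ n ≤ Real.exp (E * h) ^ n := by
          apply pow_le_pow_left₀ (by positivity) hb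
      _ = Real.exp (E * h * n) := by rw [← Real.exp_nat_mul]; ring_nf
      _ ≤ Real.exp (E * T) := by
          apply Real.exp_le_exp.mpr
          have hnh : (n : ℝ) * h ≤ T := by
            have : (n : ℝ) ≤ N := by exact_mod_cast hn
            rw [hh]
            calc (n:ℝ) * (T / N) ≤ (N:ℝ) * (T / N) := by
                  apply mul_le_mul_of_nonneg_right this (by positivity)
              _ = T := by field_simp
          nlinarith
  have h2 : a n ^ 2 ≤ 3 * A ^ 2 * Real.exp (E * T) := by
    calc a n ^ 2 ≤ 3 * A ^ 2 * (1 + E * h) ^ n := gron n hn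
      _ ≤ 3 * A ^ 2 * Real.exp (E * T) := by
          apply mul_le_mul_of_nonneg_left h1 (by positivity)
  have h3 : a n ≤ Real.sqrt (3 * A ^ 2 * Real.exp (E * T)) := by
    rw [← Real.sqrt_sq (ha n)]
    exact Real.sqrt_le_sqrt h2
  have h4 : Real.sqrt (3 * A ^ 2 * Real.exp (E * T))
      = Real.sqrt 3 * A * Real.exp (E * T / 2) := by
    rw [Real.sqrt_mul (by positivity), Real.sqrt_mul (by norm_num : (0:ℝ) ≤ 3),
      Real.sqrt_sq hA]
    congr 1
    rw [show Real.exp (E * T) = Real.exp (E * T / 2) ^ 2 by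
      rw [← Real.exp_nat_mul]; push_cast; ring_nf]
    exact Real.sqrt_sq (Real.exp_pos _).le
  rw [h4] at h3
  exact h3
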